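/- Let λ_0 ∈ (1/2,1) be a zero of a {0,±1} polynomial with constant term 1, and suppose the number of distinct values of A'_N(λ_0) is at most C_2 ρ^N with ρ < 2. Then the pair correlation at s = 0 satisfies R_2(0, λ_0, 2^N) ≥ C_2^{-1} (2/ρ)^N − 1, where R_2(0, λ_0, 2^N) = 2^{−N} · #{ (ω,τ) ∈ ({0,1}^N)² : ω ≠ τ, π_{λ_0}^N(ω) = π_{λ_0}^N(τ) } and π_λ^N(ω) = Σ_{n=0}^{N-1} ω_n λ^n. -/

import Mathlib

/-- `π_λ^N(ω) = Σ_{n=0}^{N-1} ω_n λ^n`. -/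
noncomputable def piN (lam : ℝ) (N : ℕ) (ω : Fin N → Bool) : ℝ :=
  ∑ n : Fin N, if ω n then lam ^ (n : ℕ) else 0

/-- The finite set `A'_N(λ)` of values of `π_λ^N`, counted without multiplicity. -/
noncomputable def AprimeF (lam : ℝ) (N : ℕ) : Finset ℝ :=
  (Finset.univ : Finset (Fin N → Bool)).image (piN lam N)

/-- Pair correlation at `s = 0`:
`R₂(0,λ,2^N) = 2^{-N} · #{(ω,τ) : ω ≠ τ, π_λ^N(ω) = π_λ^N(τ)}`. -/
noncomputable def R2zero (lam : ℝ) (N : ℕ) : ℝ :=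
  ((Finset.univ.filter (fun p : (Fin N → Bool) × (Fin N → Bool) =>
      p.1 ≠ p.2 ∧ piN lam N p.1 = piN lam N p.2)).card : ℝ) / 2 ^ N

/-!
Cauchy–Schwarz over the fibres of `π_λ^N`: the `2^N` words fall into `|A'_N(λ)|` fibres, so the
number of ordered pairs with equal image, `Σ_v m_v²`, is at least `4^N / |A'_N(λ)|`. Removing the
`2^N` diagonal pairs and inserting `|A'_N(λ)| ≤ C₂ ρ^N` gives the bound.
-/

open Finset

section Collisions

variable {α β : Type*} [Fintype α] [DecidableEq β]

theorem card_filter_apply_eq_apply_eq_sum_sq (f : α → β) :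
    #{p : α × α | f p.1 = f p.2} = ∑ b ∈ univ.image f, #{a | f a = b} ^ 2 := by
  rw [card_eq_sum_card_fiberwise (f := fun p : α × α => f p.1) (t := univ.image f)
    fun p _ => mem_image_of_mem f (mem_univ p.1)]
  refine sum_congr rfl fun b _ => ?_
  rw [sq, ← card_product, filter_filter]
  congr 1
  ext p
  simp only [mem_filter, mem_univ, true_and, mem_product]
  constructor
  · rintro ⟨h12, h1⟩; exact ⟨h1, h12 ▸ h1⟩
  · rintro ⟨h1, h2⟩; exact ⟨h1.trans h2.symm, h1⟩

theorem card_sq_le_card_image_mul_card_filter_apply_eq_apply (f : α → β) :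
    Fintype.card α ^ 2 ≤ #(univ.image f) * #{p : α × α | f p.1 = f p.2} := by
  rw [card_filter_apply_eq_apply_eq_sum_sq, ← card_univ, card_eq_sum_card_image f univ]
  exact sq_sum_le_card_mul_sum_sq

theorem card_filter_ne_and_apply_eq_apply_add_card [DecidableEq α] (f : α → β) :
    #{p : α × α | p.1 ≠ p.2 ∧ f p.1 = f p.2} + Fintype.card α =
      #{p : α × α | f p.1 = f p.2} := by
  have hdiag : #{p ∈ ({p : α × α | f p.1 = f p.2} : Finset _) | p.1 = p.2} = Fintype.card α := by
    have : {p ∈ ({p : α × α | f p.1 = f p.2} : Finset _) | p.1 = p.2} = univ.diag := by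
      ext p
      simp only [mem_filter, mem_univ, true_and, mem_diag]
      exact ⟨fun h => h.2, fun h => ⟨congrArg f h, h⟩⟩
    rw [this, diag_card, card_univ]
  rw [← card_filter_add_card_filter_not (s := {p : α × α | f p.1 = f p.2}) (fun p => p.1 ≠ p.2),
    ← hdiag]
  simp only [filter_filter, not_not, and_comm]

theorem sub_one_le_card_filter_ne_and_apply_eq_apply_div [DecidableEq α] [Nonempty α]
    (f : α → β) :
    (Fintype.card α : ℝ) / #(univ.image f) - 1 ≤
      #{p : α × α | p.1 ≠ p.2 ∧ f p.1 = f p.2} / Fintype.card α := by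
  have hα : (0 : ℝ) < Fintype.card α := by exact_mod_cast Fintype.card_pos
  have himage : (0 : ℝ) < #(univ.image f) := by exact_mod_cast (univ_nonempty.image f).card_pos
  have hcs : (Fintype.card α : ℝ) ^ 2 ≤ #(univ.image f) * #{p : α × α | f p.1 = f p.2} := by
    exact_mod_cast card_sq_le_card_image_mul_card_filter_apply_eq_apply f
  rw [← card_filter_ne_and_apply_eq_apply_add_card, Nat.cast_add] at hcs
  rw [sub_le_iff_le_add, div_le_iff₀ himage, div_add_one hα.ne', div_mul_eq_mul_div,
    le_div_iff₀ hα]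
  linarith

end Collisions

theorem two_pow_div_card_AprimeF_sub_one_le_R2zero (lam : ℝ) (N : ℕ) :
    2 ^ N / #(AprimeF lam N) - 1 ≤ R2zero lam N := by
  have hcube : (Fintype.card (Fin N → Bool) : ℝ) = 2 ^ N := by simp
  simpa only [R2zero, AprimeF, hcube] using
    sub_one_le_card_filter_ne_and_apply_eq_apply_div (piN lam N)

theorem stmt_12_general (lam0 : ℝ) (C2 ρ : ℝ)
    (hcard : ∀ N : ℕ, ((AprimeF lam0 N).card : ℝ) ≤ C2 * ρ ^ N) :
    ∀ N : ℕ, C2⁻¹ * (2 / ρ) ^ N - 1 ≤ R2zero lam0 N := by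
  intro N
  have hA : (0 : ℝ) < #(AprimeF lam0 N) := by
    exact_mod_cast (univ_nonempty.image (piN lam0 N)).card_pos
  calc C2⁻¹ * (2 / ρ) ^ N - 1 = 2 ^ N / (C2 * ρ ^ N) - 1 := by ring
    _ ≤ 2 ^ N / #(AprimeF lam0 N) - 1 := by gcongr; exact hcard N
    _ ≤ R2zero lam0 N := two_pow_div_card_AprimeF_sub_one_le_R2zero lam0 N

/-- If `λ₀ ∈ (1/2,1)` is a zero of a `{0,±1}` polynomial with constant term 1 and
`|A'_N(λ₀)| ≤ C₂ ρ^N` with `ρ < 2`, then `R₂(0,λ₀,2^N) ≥ C₂⁻¹(2/ρ)^N - 1`. -/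
theorem stmt_12 (lam0 : ℝ) (hlam0 : lam0 ∈ Set.Ioo (1/2 : ℝ) 1)
    (k : ℕ) (hk : 1 ≤ k) (c : ℕ → ℝ) (hc : ∀ n, c n ∈ ({-1, 0, 1} : Set ℝ))
    (hzero : 1 + ∑ n ∈ Finset.Icc 1 k, c n * lam0 ^ n = 0)
    (C2 ρ : ℝ) (hC2 : 0 < C2) (hρ0 : 0 < ρ) (hρ : ρ < 2)
    (hcard : ∀ N : ℕ, ((AprimeF lam0 N).card : ℝ) ≤ C2 * ρ ^ N) :
    ∀ N : ℕ, C2⁻¹ * (2 / ρ) ^ N - 1 ≤ R2zero lam0 N :=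
  stmt_12_general lam0 C2 ρ hcard
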